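/- arXiv:2511.15889 — 5 statements merged into one kernel-verified Lean document; each statement's English description precedes it below -/
import Mathlib

section
/- Let E be an n×n real matrix. If there exists a diagonal positive definite matrix P such that EᵀP + PE - 2P is negative definite, then for every diagonal positive definite matrix Θ with Θ ⪯ Iₙ, the matrix Iₙ - ΘE is invertible (equivalently, rank(Iₙ - ΘE) = n). -/
/-!
Suppose `(I - ΘE) v = 0` with `v ≠ 0`, so that `θᵢ (Ev)ᵢ = vᵢ` for every `i`. The Lyapunov
quadratic form then evaluates to `vᵀ(EᵀP + PE - 2P)v = 2 ∑ᵢ pᵢ vᵢ ((Ev)ᵢ - vᵢ)`, and each summand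
equals `pᵢ vᵢ² (1 - θᵢ) / θᵢ ≥ 0`, contradicting negative definiteness.
-/

open Matrix

variable {ι R : Type*} [Fintype ι]

theorem Matrix.dotProduct_transpose_mulVec_self [CommSemiring R] (A : Matrix ι ι R)
    (v : ι → R) : v ⬝ᵥ (Aᵀ *ᵥ v) = v ⬝ᵥ (A *ᵥ v) := by
  rw [dotProduct_mulVec, vecMul_transpose, dotProduct_comm]

variable [DecidableEq ι]

theorem Matrix.dotProduct_diagonal_lyapunov_mulVec [CommRing R] (E : Matrix ι ι R)
    (d v : ι → R) :
    v ⬝ᵥ ((Eᵀ * diagonal d + diagonal d * E - (2 : R) • diagonal d) *ᵥ v)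
      = 2 * ∑ i, d i * v i * ((E *ᵥ v) i - v i) := by
  have hsymm : v ⬝ᵥ ((Eᵀ * diagonal d) *ᵥ v) = v ⬝ᵥ ((diagonal d * E) *ᵥ v) := by
    rw [← dotProduct_transpose_mulVec_self, transpose_mul, diagonal_transpose, transpose_transpose]
  rw [sub_mulVec, add_mulVec, dotProduct_sub, dotProduct_add, hsymm, smul_mulVec,
    dotProduct_smul, ← mulVec_mulVec]
  simp only [dotProduct, mulVec_diagonal, smul_eq_mul, Finset.mul_sum, ← Finset.sum_sub_distrib,
    ← Finset.sum_add_distrib]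
  exact Finset.sum_congr rfl fun i _ => by ring

theorem Matrix.mul_mulVec_apply_eq_of_one_sub_diagonal_mul_mulVec_eq_zero [CommRing R]
    {θ v : ι → R} {E : Matrix ι ι R} (hv : (1 - diagonal θ * E) *ᵥ v = 0) (i : ι) :
    θ i * (E *ᵥ v) i = v i := by
  have hi := congrFun hv i
  rw [sub_mulVec, one_mulVec, ← mulVec_mulVec, Pi.sub_apply, mulVec_diagonal] at hi
  exact (sub_eq_zero.mp hi).symm

variable [Field R] [LinearOrder R] [IsStrictOrderedRing R]

theorem Matrix.dotProduct_diagonal_lyapunov_mulVec_nonneg {E : Matrix ι ι R} {d θ v : ι → R}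
    (hd : ∀ i, 0 ≤ d i) (hθ : ∀ i, 0 < θ i ∧ θ i ≤ 1) (hv : (1 - diagonal θ * E) *ᵥ v = 0) :
    0 ≤ v ⬝ᵥ ((Eᵀ * diagonal d + diagonal d * E - (2 : R) • diagonal d) *ᵥ v) := by
  rw [dotProduct_diagonal_lyapunov_mulVec]
  refine mul_nonneg zero_le_two (Finset.sum_nonneg fun i _ => ?_)
  obtain ⟨hθ_pos, hθ_le⟩ := hθ i
  have hEv := mul_mulVec_apply_eq_of_one_sub_diagonal_mul_mulVec_eq_zero hv i
  refine nonneg_of_mul_nonneg_right ?_ hθ_pos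
  calc (0 : R) ≤ d i * v i ^ 2 * (1 - θ i) :=
        mul_nonneg (mul_nonneg (hd i) (sq_nonneg _)) (sub_nonneg.mpr hθ_le)
    _ = θ i * (d i * v i * ((E *ᵥ v) i - v i)) := by rw [← hEv]; ring

/-- Lemma 1: diagonal Lyapunov condition implies `I - ΘE` invertible for all
diagonal `0 ≺ Θ ⪯ I`. -/
theorem stmt_0 {n : ℕ} (E : Matrix (Fin n) (Fin n) ℝ)
    (h : ∃ d : Fin n → ℝ, (∀ i, 0 < d i) ∧
      (∀ v : Fin n → ℝ, v ≠ 0 →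
        v ⬝ᵥ ((Eᵀ * Matrix.diagonal d + Matrix.diagonal d * E
          - (2 : ℝ) • Matrix.diagonal d) *ᵥ v) < 0)) :
    ∀ θ : Fin n → ℝ, (∀ i, 0 < θ i ∧ θ i ≤ 1) →
      IsUnit (1 - Matrix.diagonal θ * E) := by
  obtain ⟨d, hd, hlyap⟩ := h
  intro θ hθ
  rw [isUnit_iff_isUnit_det, isUnit_iff_ne_zero]
  intro hdet
  obtain ⟨v, hv_ne, hv⟩ := exists_mulVec_eq_zero_iff.mpr hdet
  exact (hlyap v hv_ne).not_ge
    (dotProduct_diagonal_lyapunov_mulVec_nonneg (fun i => (hd i).le) hθ hv)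
end

section
/- Let E be an n×n real matrix and Θ a diagonal positive definite matrix with Θ ⪯ Iₙ. If there exists a diagonal positive definite matrix Q such that (ΘE)Q + Q(ΘE)ᵀ - 2Q is negative definite, then every eigenvalue λ of ΘE satisfies Re(λ) < 1. -/
/-!
If `M (Q w) = μ (Q w)` with `Q` real symmetric, then the Hermitian form of
`S = M Q + Q Mᵀ - 2 Q` at `w` equals `2 (Re μ - 1) · w* Q w`. A real quadratic form that is
negative (positive) definite stays so on complex vectors, because the real part of its Hermitian
form splits into the forms at the real and imaginary parts. Hence `w* S w < 0 < w* Q w`, which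
forces `Re μ < 1`. For diagonal `Q` every eigenvector `v` is of the form `Q w`, with `wᵢ = vᵢ / qᵢ`.
-/

open Matrix

variable {ι : Type*} [Fintype ι]

theorem star_dotProduct_lyapunov_mulVec {R : Type*} [CommRing R] [StarRing R]
    (A P : Matrix ι ι R) (hP : Pᴴ = P) (w : ι → R) {μ : R}
    (hμ : A *ᵥ (P *ᵥ w) = μ • (P *ᵥ w)) :
    star w ⬝ᵥ ((A * P + P * Aᴴ - (2 : R) • P) *ᵥ w)
      = (μ + star μ - 2) * (star w ⬝ᵥ (P *ᵥ w)) := by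
  have hsym : star (P *ᵥ w) ⬝ᵥ w = star w ⬝ᵥ (P *ᵥ w) := by
    rw [star_mulVec, ← dotProduct_mulVec, hP]
  have hadj : star w ᵥ* (P * Aᴴ) = star (A *ᵥ (P *ᵥ w)) := by
    rw [star_mulVec, star_mulVec, hP, vecMul_vecMul]
  rw [sub_mulVec, add_mulVec, dotProduct_sub, dotProduct_add, dotProduct_mulVec _ (P * Aᴴ), hadj,
    ← mulVec_mulVec, hμ, star_smul, smul_dotProduct, hsym, dotProduct_smul, smul_mulVec,
    dotProduct_smul, smul_eq_mul, smul_eq_mul, smul_eq_mul]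
  ring

theorem re_star_dotProduct_map_algebraMap_mulVec (S : Matrix ι ι ℝ) (w : ι → ℂ) :
    (star w ⬝ᵥ (S.map (algebraMap ℝ ℂ) *ᵥ w)).re
      = (fun i ↦ (w i).re) ⬝ᵥ (S *ᵥ fun i ↦ (w i).re)
        + (fun i ↦ (w i).im) ⬝ᵥ (S *ᵥ fun i ↦ (w i).im) := by
  simp only [dotProduct, mulVec, Finset.mul_sum, Complex.re_sum, ← Finset.sum_add_distrib]
  refine Finset.sum_congr rfl fun i _ ↦ Finset.sum_congr rfl fun j _ ↦ ?_
  simp only [Pi.star_apply, map_apply, Complex.mul_re, Complex.mul_im, Complex.star_def,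
    Complex.conj_re, Complex.conj_im, Complex.coe_algebraMap, Complex.ofReal_re, Complex.ofReal_im]
  ring

theorem re_star_dotProduct_map_algebraMap_mulVec_pos {S : Matrix ι ι ℝ}
    (hS : ∀ x, x ≠ 0 → 0 < x ⬝ᵥ (S *ᵥ x)) {w : ι → ℂ} (hw : w ≠ 0) :
    0 < (star w ⬝ᵥ (S.map (algebraMap ℝ ℂ) *ᵥ w)).re := by
  have nonneg : ∀ x, 0 ≤ x ⬝ᵥ (S *ᵥ x) := fun x ↦ by
    rcases eq_or_ne x 0 with rfl | hx
    · simp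
    · exact (hS x hx).le
  rw [re_star_dotProduct_map_algebraMap_mulVec]
  by_cases hre : (fun i ↦ (w i).re) = 0
  · have him : (fun i ↦ (w i).im) ≠ 0 := fun him ↦
      hw <| funext fun i ↦ Complex.ext (congrFun hre i) (congrFun him i)
    exact add_pos_of_nonneg_of_pos (nonneg _) (hS _ him)
  · exact add_pos_of_pos_of_nonneg (hS _ hre) (nonneg _)

omit [Fintype ι] in
theorem conjTranspose_map_algebraMap (M : Matrix ι ι ℝ) :
    (M.map (algebraMap ℝ ℂ))ᴴ = Mᵀ.map (algebraMap ℝ ℂ) := by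
  ext i j
  simp

theorem map_algebraMap_mul_add_mul_transpose_sub (M Q : Matrix ι ι ℝ) :
    (M * Q + Q * Mᵀ - (2 : ℝ) • Q).map (algebraMap ℝ ℂ)
      = M.map (algebraMap ℝ ℂ) * Q.map (algebraMap ℝ ℂ)
        + Q.map (algebraMap ℝ ℂ) * (M.map (algebraMap ℝ ℂ))ᴴ
        - (2 : ℂ) • Q.map (algebraMap ℝ ℂ) := by
  rw [conjTranspose_map_algebraMap, two_smul, two_smul, Matrix.map_sub _ (map_sub _),
    Matrix.map_add _ (map_add _), Matrix.map_add _ (map_add _), Matrix.map_mul, Matrix.map_mul]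

theorem re_lt_one_of_lyapunov {M Q : Matrix ι ι ℝ} (hQ : Q.PosDef)
    (hS : ∀ x, x ≠ 0 → x ⬝ᵥ ((M * Q + Q * Mᵀ - (2 : ℝ) • Q) *ᵥ x) < 0)
    {μ : ℂ} {w : ι → ℂ} (hw : w ≠ 0)
    (hμ : M.map (algebraMap ℝ ℂ) *ᵥ (Q.map (algebraMap ℝ ℂ) *ᵥ w)
      = μ • (Q.map (algebraMap ℝ ℂ) *ᵥ w)) :
    μ.re < 1 := by
  have hQsymm : (Q.map (algebraMap ℝ ℂ))ᴴ = Q.map (algebraMap ℝ ℂ) := by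
    rw [conjTranspose_map_algebraMap, ← conjTranspose_eq_transpose_of_trivial, hQ.isHermitian.eq]
  have key := star_dotProduct_lyapunov_mulVec _ _ hQsymm w hμ
  rw [← map_algebraMap_mul_add_mul_transpose_sub] at key
  have hneg := re_star_dotProduct_map_algebraMap_mulVec_pos
    (S := -(M * Q + Q * Mᵀ - (2 : ℝ) • Q))
    (fun x hx ↦ by rw [neg_mulVec, dotProduct_neg, neg_pos]; exact hS x hx) hw
  have hpos := re_star_dotProduct_map_algebraMap_mulVec_pos
    (fun x hx ↦ by simpa using hQ.dotProduct_mulVec_pos hx) hw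
  have hcoef : μ + star μ - 2 = ((2 * (μ.re - 1) : ℝ) : ℂ) :=
    Complex.ext (by simp; ring) (by simp)
  rw [Matrix.map_neg _ (map_neg _), neg_mulVec, dotProduct_neg, Complex.neg_re, key, hcoef,
    Complex.re_ofReal_mul, neg_pos] at hneg
  linarith [neg_of_mul_neg_left hneg hpos.le]

theorem stmt_1_general {n : ℕ} (E : Matrix (Fin n) (Fin n) ℝ) (θ : Fin n → ℝ)
    (h : ∃ q : Fin n → ℝ, (∀ i, 0 < q i) ∧
      (∀ v : Fin n → ℝ, v ≠ 0 →
        v ⬝ᵥ (((Matrix.diagonal θ * E) * Matrix.diagonal q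
          + Matrix.diagonal q * (Matrix.diagonal θ * E)ᵀ
          - (2 : ℝ) • Matrix.diagonal q) *ᵥ v) < 0)) :
    ∀ (μ : ℂ) (v : Fin n → ℂ), v ≠ 0 →
      ((Matrix.diagonal θ * E).map (algebraMap ℝ ℂ)) *ᵥ v = μ • v → μ.re < 1 := by
  obtain ⟨q, hq, hS⟩ := h
  intro μ v hv hμ
  set w : Fin n → ℂ := fun i ↦ v i / q i
  have hQw : (diagonal q).map (algebraMap ℝ ℂ) *ᵥ w = v := by
    ext i
    have hqi : (q i : ℂ) ≠ 0 := Complex.ofReal_ne_zero.2 (hq i).ne'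
    simp [w, diagonal_map, mulVec_diagonal, mul_div_cancel₀, hqi]
  have hw : w ≠ 0 := fun hw ↦ hv (by rw [← hQw, hw, mulVec_zero])
  exact re_lt_one_of_lyapunov (PosDef.diagonal hq) hS hw (by rw [hQw]; exact hμ)

/-- If `(ΘE)Q + Q(ΘE)ᵀ - 2Q ≺ 0` for some diagonal positive definite `Q`,
then every (complex) eigenvalue of `ΘE` has real part `< 1`. -/
theorem stmt_1 {n : ℕ} (E : Matrix (Fin n) (Fin n) ℝ) (θ : Fin n → ℝ)
    (hθ : ∀ i, 0 < θ i ∧ θ i ≤ 1)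
    (h : ∃ q : Fin n → ℝ, (∀ i, 0 < q i) ∧
      (∀ v : Fin n → ℝ, v ≠ 0 →
        v ⬝ᵥ (((Matrix.diagonal θ * E) * Matrix.diagonal q
          + Matrix.diagonal q * (Matrix.diagonal θ * E)ᵀ
          - (2 : ℝ) • Matrix.diagonal q) *ᵥ v) < 0)) :
    ∀ (μ : ℂ) (v : Fin n → ℂ), v ≠ 0 →
      ((Matrix.diagonal θ * E).map (algebraMap ℝ ℂ)) *ᵥ v = μ • v → μ.re < 1 :=
  stmt_1_general E θ h
end

section
/- Let P be a symmetric positive definite n×n real matrix, V(x) = xᵀPx, and F : ℝⁿ → ℝⁿ continuous with F(0) = 0 and V(F(x)) < V(x) for all x ≠ 0 with V(x) ≤ γ. Then for every initial condition x₀ with V(x₀) ≤ γ, the trajectory x(k+1) = F(x(k)) converges to 0 as k → ∞. -/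
/-!
Along an orbit starting in the compact sublevel set `{V ≤ γ}`, the values `V (x k)` decrease
to some limit `L`, so every cluster point `a` of the orbit satisfies `V a = L = V (F a)`; strict
decrease away from the equilibrium forces `a = 0`, and an orbit in a compact set with a unique
cluster point converges to it. Compactness of `{V ≤ γ}` comes from `c ‖x‖² ≤ xᵀPx`, with `c` the
minimum of `V` on the unit sphere.
-/

open Matrix Filter Topology

theorem exists_pos_mul_norm_sq_le {E : Type*} [NormedAddCommGroup E] [NormedSpace ℝ E]
    [ProperSpace E] {V : E → ℝ} (hV : Continuous V) (hpos : ∀ x ≠ 0, 0 < V x)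
    (hsmul : ∀ (t : ℝ) x, V (t • x) = t ^ 2 * V x) : ∃ c > 0, ∀ x, c * ‖x‖ ^ 2 ≤ V x := by
  have hV0 : V 0 = 0 := by simpa using hsmul 0 0
  rcases subsingleton_or_nontrivial E with hE | hE
  · exact ⟨1, one_pos, fun x => by simp [Subsingleton.elim x 0, hV0]⟩
  obtain ⟨u₀, hu₀, hmin⟩ := (isCompact_sphere (0 : E) 1).exists_isMinOn
    (NormedSpace.sphere_nonempty.2 zero_le_one) hV.continuousOn
  refine ⟨V u₀, hpos u₀ (ne_zero_of_mem_unit_sphere ⟨u₀, hu₀⟩), fun x => ?_⟩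
  rcases eq_or_ne x 0 with rfl | hx
  · simp [hV0]
  have hnx : ‖x‖ ≠ 0 := norm_ne_zero_iff.2 hx
  have hu : ‖x‖⁻¹ • x ∈ Metric.sphere (0 : E) 1 := by simp [norm_smul, hnx]
  calc V u₀ * ‖x‖ ^ 2 ≤ V (‖x‖⁻¹ • x) * ‖x‖ ^ 2 := by gcongr; exact hmin hu
    _ = V x := by
      rw [hsmul, mul_comm, ← mul_assoc, ← mul_pow, mul_inv_cancel₀ hnx, one_pow, one_mul]

theorem isCompact_setOf_le_of_mul_norm_sq_le {E : Type*} [NormedAddCommGroup E] [ProperSpace E]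
    {V : E → ℝ} (hV : Continuous V) {c : ℝ} (hc : 0 < c) (hcoer : ∀ x, c * ‖x‖ ^ 2 ≤ V x)
    (γ : ℝ) : IsCompact {x | V x ≤ γ} := by
  refine Metric.isCompact_of_isClosed_isBounded (isClosed_le hV continuous_const) ?_
  refine (Metric.isBounded_iff_subset_closedBall 0).2 ⟨√(γ / c), fun x hx => ?_⟩
  rw [mem_closedBall_zero_iff]
  exact Real.le_sqrt_of_sq_le <| (le_div_iff₀' hc).2 <| (hcoer x).trans hx

theorem Matrix.PosDef.isCompact_setOf_dotProduct_mulVec_le {n : Type*} [Fintype n]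
    {P : Matrix n n ℝ} (hP : P.PosDef) (γ : ℝ) :
    IsCompact {x : n → ℝ | x ⬝ᵥ (P *ᵥ x) ≤ γ} := by
  have hV : Continuous fun x : n → ℝ => x ⬝ᵥ (P *ᵥ x) := by fun_prop
  obtain ⟨c, hc, hcoer⟩ := exists_pos_mul_norm_sq_le hV
    (fun x hx => by simpa using hP.dotProduct_mulVec_pos hx)
    fun t x => by simp only [mulVec_smul, dotProduct_smul, smul_dotProduct, smul_eq_mul]; ring
  exact isCompact_setOf_le_of_mul_norm_sq_le hV hc hcoer γ

theorem MapClusterPt.eq_of_tendsto {α Y : Type*} [TopologicalSpace Y] [T2Space Y] {l : Filter α}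
    {u : α → Y} {y z : Y} (h : MapClusterPt y l u) (hu : Tendsto u l (𝓝 z)) : y = z := by
  by_contra hne
  exact (h.clusterPt.mono hu).ne (disjoint_nhds_nhds.mpr hne).eq_bot

section Lyapunov

variable {X : Type*} {V : X → ℝ} {F : X → X} {γ : ℝ} {e : X} {x : ℕ → X}

theorem orbit_mem_sublevel (hle : ∀ y, V y ≤ γ → V (F y) ≤ V y) (hx0 : V (x 0) ≤ γ)
    (hx : ∀ k, x (k + 1) = F (x k)) : ∀ k, V (x k) ≤ γ
  | 0 => hx0
  | k + 1 =>
    have hk := orbit_mem_sublevel hle hx0 hx k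
    hx k ▸ (hle _ hk).trans hk

theorem antitone_comp_orbit (hle : ∀ y, V y ≤ γ → V (F y) ≤ V y) (hx0 : V (x 0) ≤ γ)
    (hx : ∀ k, x (k + 1) = F (x k)) : Antitone (V ∘ x) :=
  antitone_nat_of_succ_le fun k =>
    show V (x (k + 1)) ≤ V (x k) from hx k ▸ hle _ (orbit_mem_sublevel hle hx0 hx k)

variable [TopologicalSpace X]

theorem tendsto_orbit_of_lyapunov (hV : Continuous V) (hF : Continuous F)
    (hK : IsCompact {y | V y ≤ γ}) (he : F e = e)
    (hdec : ∀ y, V y ≤ γ → y ≠ e → V (F y) < V y) (hx0 : V (x 0) ≤ γ)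
    (hx : ∀ k, x (k + 1) = F (x k)) : Tendsto x atTop (𝓝 e) := by
  have hle : ∀ y, V y ≤ γ → V (F y) ≤ V y := fun y hy => by
    rcases eq_or_ne y e with rfl | hne
    · rw [he]
    · exact (hdec y hy hne).le
  have hxK := orbit_mem_sublevel hle hx0 hx
  obtain ⟨L, hL⟩ : ∃ L, Tendsto (V ∘ x) atTop (𝓝 L) :=
    ⟨_, tendsto_atTop_ciInf (antitone_comp_orbit hle hx0 hx) <|
      (hK.bddBelow_image hV.continuousOn).mono <|
        Set.range_subset_iff.2 fun k => Set.mem_image_of_mem V (hxK k)⟩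
  refine hK.tendsto_nhds_of_unique_mapClusterPt (Eventually.of_forall hxK) fun a haK ha => ?_
  have hVa : V a = L := (ha.continuousAt_comp hV.continuousAt).eq_of_tendsto hL
  have hVFa : V (F a) = L := by
    refine ((ha.continuousAt_comp hF.continuousAt).continuousAt_comp
      hV.continuousAt).eq_of_tendsto ?_
    have hshift : V ∘ F ∘ x = V ∘ x ∘ (· + 1) := funext fun k => by simp [hx]
    rw [hshift]
    exact hL.comp (tendsto_add_atTop_nat 1)
  by_contra hne
  exact (hdec a haK hne).ne (hVFa.trans hVa.symm)

end Lyapunov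

theorem stmt_12_general {n : ℕ} (P : Matrix (Fin n) (Fin n) ℝ) (hP : P.PosDef)
    (γ : ℝ) (F : (Fin n → ℝ) → (Fin n → ℝ))
    (hFc : Continuous F) (hF0 : F 0 = 0)
    (hdec : ∀ x : Fin n → ℝ, x ⬝ᵥ (P *ᵥ x) ≤ γ → x ≠ 0 →
      (F x) ⬝ᵥ (P *ᵥ F x) < x ⬝ᵥ (P *ᵥ x)) :
    ∀ x : ℕ → Fin n → ℝ, (x 0) ⬝ᵥ (P *ᵥ x 0) ≤ γ →
      (∀ k, x (k + 1) = F (x k)) →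
      Tendsto x atTop (nhds 0) := fun _ hx0 hx =>
  tendsto_orbit_of_lyapunov (by fun_prop) hFc (hP.isCompact_setOf_dotProduct_mulVec_le γ) hF0
    hdec hx0 hx

/-- Discrete-time Lyapunov convergence: trajectories starting in the sublevel
set `{V ≤ γ}` of `V(x) = xᵀPx` converge to the origin. -/
theorem stmt_12 {n : ℕ} (P : Matrix (Fin n) (Fin n) ℝ) (hP : P.PosDef)
    (γ : ℝ) (hγ : 0 < γ) (F : (Fin n → ℝ) → (Fin n → ℝ))
    (hFc : Continuous F) (hF0 : F 0 = 0)
    (hdec : ∀ x : Fin n → ℝ, x ⬝ᵥ (P *ᵥ x) ≤ γ → x ≠ 0 →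
      (F x) ⬝ᵥ (P *ᵥ F x) < x ⬝ᵥ (P *ᵥ x)) :
    ∀ x : ℕ → Fin n → ℝ, (x 0) ⬝ᵥ (P *ᵥ x 0) ≤ γ →
      (∀ k, x (k + 1) = F (x k)) →
      Tendsto x atTop (nhds 0) :=
  stmt_12_general P hP γ F hFc hF0 hdec
end

section
/- Let 𝒜_K, ℬ_{s,K} be real matrices of sizes n×n and n×ν, Ã_K of size ν×n, B̃_{s,K} of size ν×ν, P ∈ 𝕊₊ⁿ, S diagonal positive definite ν×ν, and Λ diagonal positive semidefinite with Λ ≺ I_ν. Suppose the matrix inequality [[P, -Ã_KᵀS],[-SÃ_K, U_S]] - [𝒜_K; ℬ_{s,K}]ᵀ P [𝒜_K, ℬ_{s,K}] ≻ -M(Λ) holds, where U_S = (I-B̃_{s,K})ᵀS + S(I-B̃_{s,K}) and M(Λ) = [[Ã_Kᵀ, Ã_Kᵀ],[B̃_{s,K}ᵀ, (B̃_{s,K}-I)ᵀ]]·diag(SΛ, SΛ)·[[Ã_K, B̃_{s,K}-I],[Ã_K, B̃_{s,K}]]. Then for any vectors ξ ∈ ℝⁿ, Δs ∈ ℝ^ν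 with (ξ, Δs) ≠ 0 satisfying the sector inequality (Δv - Δs)ᵀS(Δs - ΛΔv) ≥ 0 with Δv = Ã_Kξ + B̃_{s,K}Δs, it holds that (𝒜_Kξ + ℬ_{s,K}Δs)ᵀ P (𝒜_Kξ + ℬ_{s,K}Δs) < ξᵀPξ. -/
open Matrix

/-! S-procedure. At `φ = (ξ, Δs)` the quadratic form of the LMI matrix equals
`ξᵀPξ - ξ⁺ᵀPξ⁺ - 2 σ`, where `σ = (Δv - Δs)ᵀ S (Δs - ΛΔv)` is the sector form; since the form is
positive at `φ ≠ 0` and `σ ≥ 0`, the Lyapunov function strictly decreases. -/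

namespace Matrix

variable {R k m n : Type*} [CommRing R] [Fintype k] [Fintype m] [Fintype n]

theorem IsSymm.dotProduct_mulVec_comm {S : Matrix n n R} (hS : S.IsSymm) (x y : n → R) :
    x ⬝ᵥ (S *ᵥ y) = y ⬝ᵥ (S *ᵥ x) := by
  rw [← dotProduct_transpose_mulVec, hS.eq]

theorem dotProduct_transpose_mul_mul_mulVec (H G : Matrix k n R) (D : Matrix k k R)
    (x : n → R) : x ⬝ᵥ ((Hᵀ * D * G) *ᵥ x) = (H *ᵥ x) ⬝ᵥ (D *ᵥ (G *ᵥ x)) := by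
  rw [← mulVec_mulVec, ← mulVec_mulVec, dotProduct_transpose_mulVec, dotProduct_comm]

theorem sumElim_dotProduct_fromBlocks_mulVec_sumElim (P : Matrix n n R) (Q : Matrix n m R)
    (C : Matrix m n R) (D : Matrix m m R) (x : n → R) (y : m → R) :
    Sum.elim x y ⬝ᵥ (fromBlocks P Q C D *ᵥ Sum.elim x y) =
      x ⬝ᵥ (P *ᵥ x) + x ⬝ᵥ (Q *ᵥ y) + (y ⬝ᵥ (C *ᵥ x) + y ⬝ᵥ (D *ᵥ y)) := by
  simp only [fromBlocks_mulVec, Sum.elim_comp_inl, Sum.elim_comp_inr,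
    sumElim_dotProduct_sumElim, dotProduct_add]

theorem sumElim_dotProduct_fromCols_transpose_mul_mul_mulVec (A : Matrix k n R)
    (B : Matrix k m R) (P : Matrix k k R) (x : n → R) (y : m → R) :
    Sum.elim x y ⬝ᵥ (((fromCols A B)ᵀ * P * fromCols A B) *ᵥ Sum.elim x y) =
      (A *ᵥ x + B *ᵥ y) ⬝ᵥ (P *ᵥ (A *ᵥ x + B *ᵥ y)) := by
  rw [dotProduct_transpose_mul_mul_mulVec, fromCols_mulVec_sumElim]

end Matrix

section SProcedure

variable {R m n : Type*} [CommRing R] [Fintype m] [Fintype n] [DecidableEq m]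
  (A : Matrix m n R) (B : Matrix m m R) (ξ : n → R) (Δs : m → R)

theorem quadForm_fromBlocks_sector (P : Matrix n n R) {S : Matrix m m R} (hS : S.IsSymm) :
    Sum.elim ξ Δs ⬝ᵥ (fromBlocks P (-(Aᵀ * S)) (-(S * A)) ((1 - B)ᵀ * S + S * (1 - B))
        *ᵥ Sum.elim ξ Δs) =
      ξ ⬝ᵥ (P *ᵥ ξ) - 2 * ((A *ᵥ ξ + B *ᵥ Δs - Δs) ⬝ᵥ (S *ᵥ Δs)) := by
  rw [sumElim_dotProduct_fromBlocks_mulVec_sumElim]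
  simp only [neg_mulVec, add_mulVec, ← mulVec_mulVec, dotProduct_neg, dotProduct_add,
    dotProduct_transpose_mulVec, sub_mulVec, one_mulVec, add_dotProduct, sub_dotProduct]
  rw [dotProduct_comm (S *ᵥ Δs), dotProduct_comm (S *ᵥ Δs), hS.dotProduct_mulVec_comm Δs,
    hS.dotProduct_mulVec_comm Δs, sub_dotProduct]
  ring

theorem quadForm_multiplier {D : Matrix m m R} (hD : D.IsSymm) :
    Sum.elim ξ Δs ⬝ᵥ ((fromBlocks Aᵀ Aᵀ Bᵀ (B - 1)ᵀ * fromBlocks D 0 0 D * fromBlocks A (B - 1) A B)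
        *ᵥ Sum.elim ξ Δs) =
      2 * ((A *ᵥ ξ + B *ᵥ Δs - Δs) ⬝ᵥ (D *ᵥ (A *ᵥ ξ + B *ᵥ Δs))) := by
  -- the left factor is `(fromBlocks A B A (B - 1))ᵀ`: the right one with its block rows swapped
  rw [← fromBlocks_transpose, dotProduct_transpose_mul_mul_mulVec]
  simp only [fromBlocks_mulVec, Sum.elim_comp_inl, Sum.elim_comp_inr, zero_mulVec, add_zero,
    zero_add, sumElim_dotProduct_sumElim, sub_mulVec, one_mulVec, ← add_sub_assoc]
  rw [hD.dotProduct_mulVec_comm (A *ᵥ ξ + B *ᵥ Δs)]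
  ring

end SProcedure

theorem stmt_13_general {n ν : ℕ}
    (AK : Matrix (Fin n) (Fin n) ℝ) (BsK : Matrix (Fin n) (Fin ν) ℝ)
    (AtK : Matrix (Fin ν) (Fin n) ℝ) (BtsK : Matrix (Fin ν) (Fin ν) ℝ)
    (P : Matrix (Fin n) (Fin n) ℝ)
    (sd ld : Fin ν → ℝ)
    (hLMI :
      (Matrix.fromBlocks P (-(AtKᵀ * Matrix.diagonal sd))
          (-(Matrix.diagonal sd * AtK))
          ((1 - BtsK)ᵀ * Matrix.diagonal sd + Matrix.diagonal sd * (1 - BtsK))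
        - (Matrix.fromCols AK BsK)ᵀ * P * Matrix.fromCols AK BsK
        + Matrix.fromBlocks AtKᵀ AtKᵀ BtsKᵀ (BtsK - 1)ᵀ
            * Matrix.fromBlocks (Matrix.diagonal sd * Matrix.diagonal ld) 0 0
                (Matrix.diagonal sd * Matrix.diagonal ld)
            * Matrix.fromBlocks AtK (BtsK - 1) AtK BtsK).PosDef) :
    ∀ (ξ : Fin n → ℝ) (Δs : Fin ν → ℝ), ¬(ξ = 0 ∧ Δs = 0) →
      ((AtK *ᵥ ξ + BtsK *ᵥ Δs) - Δs) ⬝ᵥ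
        (Matrix.diagonal sd *ᵥ
          (Δs - Matrix.diagonal ld *ᵥ (AtK *ᵥ ξ + BtsK *ᵥ Δs))) ≥ 0 →
      (AK *ᵥ ξ + BsK *ᵥ Δs) ⬝ᵥ (P *ᵥ (AK *ᵥ ξ + BsK *ᵥ Δs)) < ξ ⬝ᵥ (P *ᵥ ξ) := by
  intro ξ Δs hne hsector
  have hx : Sum.elim ξ Δs ≠ 0 := fun h ↦
    hne (Sum.elim_eq_iff.mp (h.trans Sum.elim_zero_zero.symm))
  have hSΛ : (diagonal sd * diagonal ld).IsSymm := by
    rw [diagonal_mul_diagonal]; exact isSymm_diagonal _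
  have hpos := hLMI.dotProduct_mulVec_pos hx
  rw [star_trivial, add_mulVec, sub_mulVec, dotProduct_add, dotProduct_sub,
    quadForm_fromBlocks_sector _ _ _ _ _ (isSymm_diagonal sd),
    sumElim_dotProduct_fromCols_transpose_mul_mul_mulVec, quadForm_multiplier _ _ _ _ hSΛ]
    at hpos
  rw [mulVec_sub, mulVec_mulVec, dotProduct_sub] at hsector
  linarith

/-- S-procedure step of Theorem 3: the strict matrix inequality combined with
the incremental sector inequality implies strict decrease of the quadratic
Lyapunov function along the closed-loop velocity-form dynamics. -/
theorem stmt_13 {n ν : ℕ}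
    (AK : Matrix (Fin n) (Fin n) ℝ) (BsK : Matrix (Fin n) (Fin ν) ℝ)
    (AtK : Matrix (Fin ν) (Fin n) ℝ) (BtsK : Matrix (Fin ν) (Fin ν) ℝ)
    (P : Matrix (Fin n) (Fin n) ℝ) (hP : P.PosDef)
    (sd ld : Fin ν → ℝ) (hsd : ∀ i, 0 < sd i)
    (hld : ∀ i, 0 ≤ ld i ∧ ld i < 1)
    (hLMI :
      (Matrix.fromBlocks P (-(AtKᵀ * Matrix.diagonal sd))
          (-(Matrix.diagonal sd * AtK))
          ((1 - BtsK)ᵀ * Matrix.diagonal sd + Matrix.diagonal sd * (1 - BtsK))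
        - (Matrix.fromCols AK BsK)ᵀ * P * Matrix.fromCols AK BsK
        + Matrix.fromBlocks AtKᵀ AtKᵀ BtsKᵀ (BtsK - 1)ᵀ
            * Matrix.fromBlocks (Matrix.diagonal sd * Matrix.diagonal ld) 0 0
                (Matrix.diagonal sd * Matrix.diagonal ld)
            * Matrix.fromBlocks AtK (BtsK - 1) AtK BtsK).PosDef) :
    ∀ (ξ : Fin n → ℝ) (Δs : Fin ν → ℝ), ¬(ξ = 0 ∧ Δs = 0) →
      ((AtK *ᵥ ξ + BtsK *ᵥ Δs) - Δs) ⬝ᵥ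
        (Matrix.diagonal sd *ᵥ
          (Δs - Matrix.diagonal ld *ᵥ (AtK *ᵥ ξ + BtsK *ᵥ Δs))) ≥ 0 →
      (AK *ᵥ ξ + BsK *ᵥ Δs) ⬝ᵥ (P *ᵥ (AK *ᵥ ξ + BsK *ᵥ Δs)) < ξ ⬝ᵥ (P *ᵥ ξ) :=
  stmt_13_general AK BsK AtK BtsK P sd ld hLMI
end

section
/- Let Q ∈ 𝕊₊ⁿ and E ∈ ℝⁿˣⁿ with QEᵀ + EQ - 2Q ≺ 0, and let Θ be a diagonal positive definite matrix with Θ ⪯ I. Then Θ(QEᵀ + EQ - 2Q)Θ ≺ 0, and if moreover Q is diagonal, setting Q̃ = QΘ (which is diagonal positive definite), it holds that (ΘE)Q̃ + Q̃(ΘE)ᵀ - 2Q̃ ≺ 0. -/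
open Matrix

/-!
Writing `M = QEᵀ + EQ - 2Q`, the congruence `ΘMΘ` has quadratic form `v ↦ (Θv)ᵀ M (Θv)`, which is
negative for `v ≠ 0` because `Θ` is invertible. When `Q` is diagonal it commutes with `Θ`, and
`(ΘE)Q̃ + Q̃(ΘE)ᵀ - 2Q̃ = ΘMΘ + 2(ΘQ̃ - Q̃)`; the correction is diagonal with entries
`2 qᵢ θᵢ (θᵢ - 1) ≤ 0`, so it only makes the form more negative.
-/

namespace Matrix

variable {n R : Type*} [Fintype n]

theorem dotProduct_transpose_mul_mul_mulVec_s15 [CommSemiring R] (B M : Matrix n n R) (v : n → R) :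
    v ⬝ᵥ ((Bᵀ * M * B) *ᵥ v) = (B *ᵥ v) ⬝ᵥ (M *ᵥ (B *ᵥ v)) := by
  rw [← mulVec_mulVec, ← mulVec_mulVec, dotProduct_mulVec, vecMul_transpose]

theorem dotProduct_transpose_mul_mul_mulVec_neg [CommRing R] [Preorder R] {B M : Matrix n n R}
    (hM : ∀ v : n → R, v ≠ 0 → v ⬝ᵥ (M *ᵥ v) < 0) (hB : Function.Injective B.mulVec)
    {v : n → R} (hv : v ≠ 0) : v ⬝ᵥ ((Bᵀ * M * B) *ᵥ v) < 0 := by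
  rw [dotProduct_transpose_mul_mul_mulVec_s15]
  exact hM _ fun h => hv (hB (h.trans (mulVec_zero B).symm))

variable [DecidableEq n]

theorem mulVec_injective_diagonal [CommRing R] [IsDomain R] {d : n → R} (hd : ∀ i, d i ≠ 0) :
    Function.Injective (diagonal d).mulVec :=
  mulVec_injective_of_det_ne_zero (by simpa [det_diagonal, Finset.prod_ne_zero_iff] using hd)

theorem dotProduct_diagonal_mulVec_nonpos [CommRing R] [LinearOrder R] [IsStrictOrderedRing R]
    {d : n → R} (hd : ∀ i, d i ≤ 0) (v : n → R) : v ⬝ᵥ (diagonal d *ᵥ v) ≤ 0 := by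
  simp only [dotProduct, mulVec_diagonal]
  exact Finset.sum_nonpos fun i _ => by nlinarith [mul_self_nonneg (v i), hd i]

theorem diagonal_mul_add_mul_transpose_sub_eq [CommRing R] (q θ : n → R) (E : Matrix n n R) :
    (diagonal θ * E) * (diagonal q * diagonal θ) + (diagonal q * diagonal θ) * (diagonal θ * E)ᵀ
        - (2 : R) • (diagonal q * diagonal θ)
      = diagonal θ * (diagonal q * Eᵀ + E * diagonal q - (2 : R) • diagonal q) * diagonal θ
        + diagonal (fun i => 2 * q i * θ i * (θ i - 1)) := by
  ext i j
  simp only [transpose_mul, diagonal_transpose, diagonal_mul_diagonal, Matrix.mul_add,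
    Matrix.add_mul, Matrix.mul_sub, Matrix.sub_mul, Matrix.mul_smul, Matrix.smul_mul,
    ← Matrix.mul_assoc, Matrix.add_apply, Matrix.sub_apply, Matrix.smul_apply, mul_diagonal,
    diagonal_mul, transpose_apply, diagonal_apply, smul_eq_mul]
  split_ifs with h
  · subst h; ring
  · ring

end Matrix

/-- Congruence by a diagonal `0 ≺ Θ ⪯ I` preserves negative definiteness of
`QEᵀ + EQ - 2Q`, and when `Q` is diagonal, setting `Q̃ = QΘ` we get
`(ΘE)Q̃ + Q̃(ΘE)ᵀ - 2Q̃ ≺ 0`. -/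
theorem stmt_15 {n : ℕ} (qd : Fin n → ℝ) (hqd : ∀ i, 0 < qd i)
    (E : Matrix (Fin n) (Fin n) ℝ) (θ : Fin n → ℝ)
    (hθ : ∀ i, θ i ∈ Set.Ioc (0 : ℝ) 1)
    (hneg : ∀ v : Fin n → ℝ, v ≠ 0 →
      v ⬝ᵥ ((Matrix.diagonal qd * Eᵀ + E * Matrix.diagonal qd
        - (2 : ℝ) • Matrix.diagonal qd) *ᵥ v) < 0) :
    (∀ v : Fin n → ℝ, v ≠ 0 →
      v ⬝ᵥ ((Matrix.diagonal θ *
        (Matrix.diagonal qd * Eᵀ + E * Matrix.diagonal qd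
          - (2 : ℝ) • Matrix.diagonal qd) * Matrix.diagonal θ) *ᵥ v) < 0)
    ∧ (∀ v : Fin n → ℝ, v ≠ 0 →
        v ⬝ᵥ (((Matrix.diagonal θ * E) * (Matrix.diagonal qd * Matrix.diagonal θ)
          + (Matrix.diagonal qd * Matrix.diagonal θ) * (Matrix.diagonal θ * E)ᵀ
          - (2 : ℝ) • (Matrix.diagonal qd * Matrix.diagonal θ)) *ᵥ v) < 0) := by
  have hΘ : Function.Injective (diagonal θ).mulVec :=
    mulVec_injective_diagonal fun i => (hθ i).1.ne'
  have congruence : ∀ v : Fin n → ℝ, v ≠ 0 →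
      v ⬝ᵥ ((diagonal θ * (diagonal qd * Eᵀ + E * diagonal qd - (2 : ℝ) • diagonal qd)
        * diagonal θ) *ᵥ v) < 0 := fun v hv => by
    simpa only [diagonal_transpose] using dotProduct_transpose_mul_mul_mulVec_neg hneg hΘ hv
  refine ⟨congruence, fun v hv => ?_⟩
  have correction : v ⬝ᵥ (diagonal (fun i => 2 * qd i * θ i * (θ i - 1)) *ᵥ v) ≤ 0 :=
    dotProduct_diagonal_mulVec_nonpos (fun i => mul_nonpos_of_nonneg_of_nonpos
      (by linarith [mul_pos (hqd i) (hθ i).1]) (by linarith [(hθ i).2])) v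
  rw [diagonal_mul_add_mul_transpose_sub_eq, add_mulVec, dotProduct_add]
  linarith [congruence v hv]
end
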